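/- Let r ≥ 2 be an integer and m_1 ≥ ... ≥ m_r ≥ 1 integers with m_1 ≥ 2. Then it is impossible that ∑ m_i² − m_r < ((r−1)/r²)·(∑ m_i)². -/
import Mathlib

/-- For `r ≥ 2` and integers `m 0 ≥ ... ≥ m (r-1) ≥ 1` with `m 0 ≥ 2`, it is
impossible that `∑ mᵢ² − m_r < ((r−1)/r²)·(∑ mᵢ)²`. -/
theorem stmt_4 (r : ℕ) (hr : 2 ≤ r) (m : Fin r → ℤ)
    (hanti : Antitone m)
    (hone : ∀ i, 1 ≤ m i)
    (htwo : 2 ≤ m ⟨0, by omega⟩) :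
    ¬ ((∑ i, ((m i : ℚ)) ^ 2) - (m ⟨r - 1, by omega⟩ : ℚ) <
        (((r : ℚ) - 1) / (r : ℚ) ^ 2) * (∑ i, (m i : ℚ)) ^ 2) := by
  intro h
  set i0 : Fin r := ⟨0, by omega⟩
  set ir : Fin r := ⟨r - 1, by omega⟩
  set S : ℤ := ∑ i, m i with hSdef
  set Q : ℤ := ∑ i, (m i)^2 with hQdef
  have hCS : S ^ 2 ≤ (r : ℤ) * Q := by
    have := sq_sum_le_card_mul_sum_sq (s := Finset.univ) (f := m)
    simpa using this
  have hlast : ∀ i, m ir ≤ m i := fun i => hanti (by simp only [Fin.le_def, ir]; omega)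
  have hQlb : m i0 ^ 2 + (r - 1 : ℤ) * (m ir) ^ 2 ≤ Q := by
    have h1 : Q = m i0 ^ 2 + ∑ i ∈ Finset.univ.erase i0, (m i) ^ 2 := by
      rw [hQdef, ← Finset.add_sum_erase _ _ (Finset.mem_univ i0)]
    have h2 : ((Finset.univ.erase i0).card : ℤ) * (m ir) ^ 2 ≤
        ∑ i ∈ Finset.univ.erase i0, (m i) ^ 2 := by
      rw [← nsmul_eq_mul]
      apply Finset.card_nsmul_le_sum
      intro i _
      have := hlast i
      have := hone i
      nlinarith [hone ir]
    have hcard : (Finset.univ.erase i0).card = r - 1 := by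
      simp [Finset.card_erase_of_mem]
    rw [hcard] at h2
    have hc : ((r - 1 : ℕ) : ℤ) = (r : ℤ) - 1 := by omega
    rw [hc] at h2
    rw [h1]
    linarith
  have h01 : m ir ≤ m i0 := hlast i0
  have hr1 : m ir ≥ 1 := hone ir
  have hrZ : (2 : ℤ) ≤ (r : ℤ) := by exact_mod_cast hr
  have hQgt : ((r : ℤ) + 1) * m ir < Q := by
    rcases eq_or_lt_of_le hr1 with heq | hgt
    · rw [← heq] at hQlb ⊢; nlinarith [sq_nonneg (m i0 - 2)]
    · nlinarith [mul_le_mul h01 h01 (by linarith) (by linarith),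
        mul_nonneg (by linarith : (0:ℤ) ≤ (r:ℤ) - 2) (by nlinarith : (0:ℤ) ≤ m ir ^ 2 - m ir)]
  have hSlb : (r : ℤ) ≤ S := by
    calc (r : ℤ) = ∑ _i : Fin r, 1 := by simp
    _ ≤ S := Finset.sum_le_sum fun i _ => hone i
  -- key: S^2 < (r+1)(Q - m ir)
  have hkey : S ^ 2 < ((r : ℤ) + 1) * (Q - m ir) := by nlinarith
  -- cast hypothesis
  have hcastS : ((S : ℚ)) = ∑ i, (m i : ℚ) := by push_cast [hSdef]; rfl
  have hcastQ : ((Q : ℚ)) = ∑ i, (m i : ℚ) ^ 2 := by push_cast [hQdef]; rfl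
  rw [← hcastS, ← hcastQ] at h
  have hrq : (0 : ℚ) < (r : ℚ) := by positivity
  have h' : (r : ℚ) ^ 2 * ((Q : ℚ) - (m ir : ℚ)) < ((r : ℚ) - 1) * (S : ℚ) ^ 2 := by
    rw [div_mul_eq_mul_div, lt_div_iff₀ (by positivity)] at h
    linarith [h]
  have hkeyQ : ((S : ℚ)) ^ 2 < ((r : ℚ) + 1) * ((Q : ℚ) - (m ir : ℚ)) := by exact_mod_cast hkey
  have hQmQ : (0 : ℚ) < (Q : ℚ) - (m ir : ℚ)  := by
    nlinarith [sq_nonneg (S : ℚ)]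
  nlinarith
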